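/- arXiv:2307.01484 — 3 statements merged into one kernel-verified Lean document; each statement's English description precedes it below -/
import Mathlib

section
/- In the abstract Biot–Brinkman setting, for every z = (γ, ζ, θ, ψ, q) ∈ X, the element y := (γ, ζ + (1/2)√(κν)·curl θ, −θ, −ψ, −q) ∈ X satisfies ⟨A(z), y⟩ ≥ (1/4)·‖z‖_X² and ‖y‖_X ≤ √2 · ‖z‖_X. (This is the quasi-coercivity Lemma 3.2 of the paper: for every z ∈ X there exists y ∈ X with ⟨A(z), y⟩ ≳ ‖z‖_X² and ‖y‖_X ≤ √2‖z‖_X, with constants independent of the parameters μ, λ, κ, ν, c₀, α.) -/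
open scoped RealInnerProductSpace

/-- The bilinear form (3.3) of the vorticity-based Biot–Brinkman system, on
`X := U × V × W × P × P`, with `x = (u, v, ω, φ, p)` and `y = (γ, ζ, θ, ψ, q)`. -/
noncomputable def biotBrinkmanForm {U V W P Sig : Type*}
    [NormedAddCommGroup U] [InnerProductSpace ℝ U]
    [NormedAddCommGroup V] [InnerProductSpace ℝ V]
    [NormedAddCommGroup W] [InnerProductSpace ℝ W]
    [NormedAddCommGroup P] [InnerProductSpace ℝ P]
    [NormedAddCommGroup Sig] [InnerProductSpace ℝ Sig]
    (μ lam κ ν c₀ α : ℝ)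
    (eps : U →ₗ[ℝ] Sig) (divU : U →ₗ[ℝ] P) (divV : V →ₗ[ℝ] P) (curl : W →ₗ[ℝ] V)
    (x y : U × V × W × P × P) : ℝ :=
  2 * μ * ⟪eps x.1, eps y.1⟫ - ⟪x.2.2.2.1, divU y.1⟫
    + (1 / κ) * ⟪x.2.1, y.2.1⟫ + (ν / κ) * ⟪divV x.2.1, divV y.2.1⟫
    + Real.sqrt (ν / κ) * ⟪curl x.2.2.1, y.2.1⟫ - ⟪x.2.2.2.2, divV y.2.1⟫
    + Real.sqrt (ν / κ) * ⟪curl y.2.2.1, x.2.1⟫ - ⟪x.2.2.1, y.2.2.1⟫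
    - ⟪y.2.2.2.1, divU x.1⟫ - (1 / lam) * ⟪x.2.2.2.1, y.2.2.2.1⟫
    + (α / lam) * ⟪x.2.2.2.2, y.2.2.2.1⟫
    - ⟪y.2.2.2.2, divV x.2.1⟫ + (α / lam) * ⟪x.2.2.2.1, y.2.2.2.2⟫
    - (c₀ + α ^ 2 / lam) * ⟪x.2.2.2.2, y.2.2.2.2⟫

/-- The square of the parameter-weighted norm (3.2):
`‖x‖_X² = 2μ‖εu‖² + (1/κ)‖v‖² + (ν/κ)‖div v‖² + ‖ω‖² + ν‖curl ω‖² + c₀‖p‖²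
  + (1/λ)‖φ − αp‖²`. -/
noncomputable def biotBrinkmanNormXSq {U V W P Sig : Type*}
    [NormedAddCommGroup U] [InnerProductSpace ℝ U]
    [NormedAddCommGroup V] [InnerProductSpace ℝ V]
    [NormedAddCommGroup W] [InnerProductSpace ℝ W]
    [NormedAddCommGroup P] [InnerProductSpace ℝ P]
    [NormedAddCommGroup Sig] [InnerProductSpace ℝ Sig]
    (μ lam κ ν c₀ α : ℝ)
    (eps : U →ₗ[ℝ] Sig) (divV : V →ₗ[ℝ] P) (curl : W →ₗ[ℝ] V)
    (x : U × V × W × P × P) : ℝ :=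
  2 * μ * ‖eps x.1‖ ^ 2 + (1 / κ) * ‖x.2.1‖ ^ 2 + (ν / κ) * ‖divV x.2.1‖ ^ 2
    + ‖x.2.2.1‖ ^ 2 + ν * ‖curl x.2.2.1‖ ^ 2 + c₀ * ‖x.2.2.2.2‖ ^ 2
    + (1 / lam) * ‖x.2.2.2.1 - α • x.2.2.2.2‖ ^ 2

/-!
Testing with `y = (γ, ζ + τ curl θ, -θ, -ψ, -q)`, `τ = √(κν)/2`, the couplings through
`div_U` and the two `√(ν/κ)⟨curl θ, ζ⟩` terms cancel, the pressure block becomes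
`c₀‖q‖² + (1/λ)‖ψ - αq‖²`, and `div_V ∘ curl = 0` keeps the shift out of the divergence term.
What is left is `‖z‖_X² + (τ/κ)⟨ζ, curl θ⟩ - (ν/2)‖curl θ‖²`, and Young's inequality absorbs
the cross term. The shift changes the norm only through
`(1/κ)‖ζ + τ curl θ‖² ≤ (2/κ)‖ζ‖² + (ν/2)‖curl θ‖²`.
-/

section InnerProduct

variable {E : Type*} [NormedAddCommGroup E] [InnerProductSpace ℝ E]

theorem norm_add_smul_sq_real (x y : E) (r : ℝ) :
    ‖x + r • y‖ ^ 2 = ‖x‖ ^ 2 + 2 * r * ⟪x, y⟫ + r ^ 2 * ‖y‖ ^ 2 := by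
  rw [norm_add_sq_real, real_inner_smul_right, norm_smul, mul_pow, Real.norm_eq_abs, sq_abs]
  ring

theorem neg_le_two_mul_real_inner_smul (x y : E) (r : ℝ) :
    -(‖x‖ ^ 2 + r ^ 2 * ‖y‖ ^ 2) ≤ 2 * r * ⟪x, y⟫ := by
  linarith [norm_add_smul_sq_real x y r, sq_nonneg ‖x + r • y‖]

theorem norm_add_sq_le_two_mul (x y : E) : ‖x + y‖ ^ 2 ≤ 2 * (‖x‖ ^ 2 + ‖y‖ ^ 2) := by
  linarith [parallelogram_law_with_norm ℝ x y, sq_nonneg ‖x - y‖]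

variable {κ ν τ : ℝ}

theorem neg_le_inv_mul_mul_real_inner (hκ : 0 < κ) (hτ : τ ^ 2 = κ * ν / 4) (x y : E) :
    -((1 / 2) * ((1 / κ) * ‖x‖ ^ 2) + ν / 8 * ‖y‖ ^ 2) ≤ (1 / κ) * (τ * ⟪x, y⟫) := by
  have := neg_le_two_mul_real_inner_smul x y τ
  calc -((1 / 2) * ((1 / κ) * ‖x‖ ^ 2) + ν / 8 * ‖y‖ ^ 2)
      = (1 / κ) * (-(‖x‖ ^ 2 + τ ^ 2 * ‖y‖ ^ 2) / 2) := by
        rw [hτ]; field_simp; ring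
    _ ≤ (1 / κ) * (τ * ⟪x, y⟫) := by gcongr; linarith

theorem inv_mul_norm_add_smul_sq_sub_le (hκ : 0 < κ) (hτ : τ ^ 2 = κ * ν / 4) (x y : E) :
    (1 / κ) * (‖x + τ • y‖ ^ 2 - ‖x‖ ^ 2) ≤ (1 / κ) * ‖x‖ ^ 2 + ν / 2 * ‖y‖ ^ 2 := by
  have := norm_add_sq_le_two_mul x (τ • y)
  rw [norm_smul, mul_pow, Real.norm_eq_abs, sq_abs] at this
  calc (1 / κ) * (‖x + τ • y‖ ^ 2 - ‖x‖ ^ 2)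
      ≤ (1 / κ) * (‖x‖ ^ 2 + 2 * τ ^ 2 * ‖y‖ ^ 2) := by gcongr; linarith
    _ = (1 / κ) * ‖x‖ ^ 2 + ν / 2 * ‖y‖ ^ 2 := by rw [hτ]; field_simp; ring

end InnerProduct

section QuasiCoercivity

variable {U V W P Sig : Type*}
    [NormedAddCommGroup U] [InnerProductSpace ℝ U]
    [NormedAddCommGroup V] [InnerProductSpace ℝ V]
    [NormedAddCommGroup W] [InnerProductSpace ℝ W]
    [NormedAddCommGroup P] [InnerProductSpace ℝ P]
    [NormedAddCommGroup Sig] [InnerProductSpace ℝ Sig]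
    (μ lam κ ν c₀ α : ℝ)
    (eps : U →ₗ[ℝ] Sig) (divU : U →ₗ[ℝ] P) (divV : V →ₗ[ℝ] P) (curl : W →ₗ[ℝ] V)

theorem biotBrinkmanForm_test_eq (hdivcurl : ∀ θ : W, divV (curl θ) = 0) (τ : ℝ)
    (γ : U) (ζ : V) (θ : W) (ψ q : P) :
    biotBrinkmanForm μ lam κ ν c₀ α eps divU divV curl (γ, ζ, θ, ψ, q)
        (γ, ζ + τ • curl θ, -θ, -ψ, -q) =
      biotBrinkmanNormXSq μ lam κ ν c₀ α eps divV curl (γ, ζ, θ, ψ, q)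
        + (1 / κ) * (τ * ⟪ζ, curl θ⟫) - (ν - Real.sqrt (ν / κ) * τ) * ‖curl θ‖ ^ 2 := by
  simp only [biotBrinkmanForm, biotBrinkmanNormXSq, map_add, map_smul, map_neg, hdivcurl,
    smul_zero, add_zero, inner_add_right, inner_neg_right, inner_neg_left,
    real_inner_smul_right, real_inner_self_eq_norm_sq]
  rw [norm_sub_sq_real, real_inner_smul_right, norm_smul, mul_pow, Real.norm_eq_abs, sq_abs,
    real_inner_comm q ψ, real_inner_comm (curl θ) ζ]
  ring

theorem biotBrinkmanNormXSq_test_eq (hdivcurl : ∀ θ : W, divV (curl θ) = 0) (τ : ℝ)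
    (γ : U) (ζ : V) (θ : W) (ψ q : P) :
    biotBrinkmanNormXSq μ lam κ ν c₀ α eps divV curl (γ, ζ + τ • curl θ, -θ, -ψ, -q) =
      biotBrinkmanNormXSq μ lam κ ν c₀ α eps divV curl (γ, ζ, θ, ψ, q)
        + (1 / κ) * (‖ζ + τ • curl θ‖ ^ 2 - ‖ζ‖ ^ 2) := by
  simp only [biotBrinkmanNormXSq, map_add, map_smul, map_neg, hdivcurl, smul_zero, add_zero,
    norm_neg, smul_neg, sub_neg_eq_add, neg_add_eq_sub, norm_sub_rev (α • q)]
  ring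

theorem le_biotBrinkmanNormXSq (hμ : 0 ≤ μ) (hlam : 0 ≤ lam) (hκ : 0 ≤ κ) (hν : 0 ≤ ν)
    (hc₀ : 0 ≤ c₀) (u : U) (v : V) (ω : W) (φ p : P) :
    (1 / κ) * ‖v‖ ^ 2 + ν * ‖curl ω‖ ^ 2 ≤
      biotBrinkmanNormXSq μ lam κ ν c₀ α eps divV curl (u, v, ω, φ, p) := by
  unfold biotBrinkmanNormXSq
  have := sq_nonneg ‖ω‖
  have : 0 ≤ μ * ‖eps u‖ ^ 2 := by positivity
  have : 0 ≤ ν / κ * ‖divV v‖ ^ 2 := by positivity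
  have : 0 ≤ c₀ * ‖p‖ ^ 2 := by positivity
  have : 0 ≤ (1 / lam) * ‖φ - α • p‖ ^ 2 := by positivity
  dsimp only
  linarith

end QuasiCoercivity

theorem biotBrinkman_quasi_coercivity_general {U V W P Sig : Type*}
    [NormedAddCommGroup U] [InnerProductSpace ℝ U]
    [NormedAddCommGroup V] [InnerProductSpace ℝ V]
    [NormedAddCommGroup W] [InnerProductSpace ℝ W]
    [NormedAddCommGroup P] [InnerProductSpace ℝ P]
    [NormedAddCommGroup Sig] [InnerProductSpace ℝ Sig]
    (μ lam κ ν c₀ α : ℝ)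
    (hμ : 0 < μ) (hlam : 0 < lam) (hκ : 0 < κ) (hν : 0 < ν) (hc₀ : 0 < c₀)
    (eps : U →ₗ[ℝ] Sig) (divU : U →ₗ[ℝ] P) (divV : V →ₗ[ℝ] P) (curl : W →ₗ[ℝ] V)
    (hdivcurl : ∀ θ : W, divV (curl θ) = 0)
    (γ : U) (ζ : V) (θ : W) (ψ q : P) :
    biotBrinkmanForm μ lam κ ν c₀ α eps divU divV curl (γ, ζ, θ, ψ, q)
        (γ, ζ + ((1 / 2) * Real.sqrt (κ * ν)) • curl θ, -θ, -ψ, -q) ≥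
      (1 / 4) * biotBrinkmanNormXSq μ lam κ ν c₀ α eps divV curl (γ, ζ, θ, ψ, q) ∧
    Real.sqrt (biotBrinkmanNormXSq μ lam κ ν c₀ α eps divV curl
        (γ, ζ + ((1 / 2) * Real.sqrt (κ * ν)) • curl θ, -θ, -ψ, -q)) ≤
      Real.sqrt 2 *
        Real.sqrt (biotBrinkmanNormXSq μ lam κ ν c₀ α eps divV curl (γ, ζ, θ, ψ, q)) := by
  set τ := (1 / 2) * Real.sqrt (κ * ν)
  have hτ_sq : τ ^ 2 = κ * ν / 4 := by
    rw [mul_pow, Real.sq_sqrt (by positivity)]; ring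
  have hτ_mul : ν - Real.sqrt (ν / κ) * τ = ν / 2 := by
    have : ν / κ * (κ * ν) = ν ^ 2 := by field_simp
    rw [mul_left_comm, ← Real.sqrt_mul (by positivity), this, Real.sqrt_sq hν.le]; ring
  have hcross := neg_le_inv_mul_mul_real_inner hκ hτ_sq ζ (curl θ)
  have hsplit := inv_mul_norm_add_smul_sq_sub_le hκ hτ_sq ζ (curl θ)
  have hN := le_biotBrinkmanNormXSq μ lam κ ν c₀ α eps divV curl hμ.le hlam.le hκ.le hν.le
    hc₀.le γ ζ θ ψ q
  have hv : 0 ≤ (1 / κ) * ‖ζ‖ ^ 2 := by positivity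
  have hcurl : 0 ≤ ν * ‖curl θ‖ ^ 2 := by positivity
  rw [biotBrinkmanForm_test_eq _ _ _ _ _ _ _ _ _ _ hdivcurl,
    biotBrinkmanNormXSq_test_eq _ _ _ _ _ _ _ _ _ hdivcurl, hτ_mul,
    ← Real.sqrt_mul zero_le_two]
  exact ⟨by linarith, Real.sqrt_le_sqrt (by linarith)⟩

/-- Quasi-coercivity (Lemma 3.2): for every `z = (γ, ζ, θ, ψ, q) ∈ X`, the element
`y := (γ, ζ + (1/2)√(κν)·curl θ, −θ, −ψ, −q)` satisfies
`⟨A(z), y⟩ ≥ (1/4)‖z‖_X²` and `‖y‖_X ≤ √2‖z‖_X`,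
with constants independent of the parameters `μ, λ, κ, ν, c₀, α`. -/
theorem biotBrinkman_quasi_coercivity {U V W P Sig : Type*}
    [NormedAddCommGroup U] [InnerProductSpace ℝ U]
    [NormedAddCommGroup V] [InnerProductSpace ℝ V]
    [NormedAddCommGroup W] [InnerProductSpace ℝ W]
    [NormedAddCommGroup P] [InnerProductSpace ℝ P]
    [NormedAddCommGroup Sig] [InnerProductSpace ℝ Sig]
    (μ lam κ ν c₀ α : ℝ)
    (hμ : 0 < μ) (hlam : 0 < lam) (hκ : 0 < κ) (hν : 0 < ν) (hc₀ : 0 < c₀)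
    (hα : 0 < α)
    (eps : U →ₗ[ℝ] Sig) (divU : U →ₗ[ℝ] P) (divV : V →ₗ[ℝ] P) (curl : W →ₗ[ℝ] V)
    (hdivcurl : ∀ θ : W, divV (curl θ) = 0)
    (γ : U) (ζ : V) (θ : W) (ψ q : P) :
    biotBrinkmanForm μ lam κ ν c₀ α eps divU divV curl (γ, ζ, θ, ψ, q)
        (γ, ζ + ((1 / 2) * Real.sqrt (κ * ν)) • curl θ, -θ, -ψ, -q) ≥
      (1 / 4) * biotBrinkmanNormXSq μ lam κ ν c₀ α eps divV curl (γ, ζ, θ, ψ, q) ∧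
    Real.sqrt (biotBrinkmanNormXSq μ lam κ ν c₀ α eps divV curl
        (γ, ζ + ((1 / 2) * Real.sqrt (κ * ν)) • curl θ, -θ, -ψ, -q)) ≤
      Real.sqrt 2 *
        Real.sqrt (biotBrinkmanNormXSq μ lam κ ν c₀ α eps divV curl (γ, ζ, θ, ψ, q)) :=
  biotBrinkman_quasi_coercivity_general μ lam κ ν c₀ α hμ hlam hκ hν hc₀ eps divU divV curl hdivcurl
    γ ζ θ ψ q
end

section
/- Global parameter-robust inf-sup stability (abstract form of Theorem 3.5). For all constants C₁, C₂, Ĉ₁, Ĉ₂ > 0 there exist constants c > 0 and C > 0, depending only on C₁, C₂, Ĉ₁, Ĉ₂ (and in particular independent of the parameters μ, λ, κ, ν, c₀, α), such that the following holds. Fix the abstract Biot–Brinkman setting, let r : P → ℝ be a seminorm on P, and define ‖x‖_ε² := ‖x‖_X² + r(p)² + (1/(2μ))‖φ‖² for x = (u, v, ω, φ, p) ∈ X. Let x = (u, v, ω, φ, p) ∈ X and suppose there exist ζ₂ ∈ V and γ₃ ∈ U with: −⟨p, div_V ζ₂⟩ ≥ C₁ · r(p)², ((1/κ)‖ζ₂‖²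 + (ν/κ)‖div_V ζ₂‖²)^{1/2} ≤ C₂ · r(p), −⟨φ, div_U γ₃⟩ ≥ Ĉ₁ · (1/(2μ))‖φ‖², and √(2μ)‖εγ₃‖ ≤ Ĉ₂ · (1/√(2μ))‖φ‖. Then there exists y ∈ X with ⟨A(x), y⟩ ≥ c‖x‖_ε² and ‖y‖_ε ≤ C‖x‖_ε; in particular sup_{y ∈ X, y ≠ 0} ⟨A(x), y⟩ / ‖y‖_ε ≥ (c/C)‖x‖_ε. -/
open scoped RealInnerProductSpace

universe u

/-- The square of the full parameter-weighted norm (3.5):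
`‖x‖_ε² := ‖x‖_X² + r(p)² + (1/(2μ))‖φ‖²`, where `r` is a seminorm on `P`. -/
noncomputable def biotBrinkmanNormESq {U V W P Sig : Type*}
    [NormedAddCommGroup U] [InnerProductSpace ℝ U]
    [NormedAddCommGroup V] [InnerProductSpace ℝ V]
    [NormedAddCommGroup W] [InnerProductSpace ℝ W]
    [NormedAddCommGroup P] [InnerProductSpace ℝ P]
    [NormedAddCommGroup Sig] [InnerProductSpace ℝ Sig]
    (μ lam κ ν c₀ α : ℝ)
    (eps : U →ₗ[ℝ] Sig) (divV : V →ₗ[ℝ] P) (curl : W →ₗ[ℝ] V)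
    (r : Seminorm ℝ P) (x : U × V × W × P × P) : ℝ :=
  biotBrinkmanNormXSq μ lam κ ν c₀ α eps divV curl x + (r x.2.2.2.2) ^ 2
    + (1 / (2 * μ)) * ‖x.2.2.2.1‖ ^ 2


private lemma young_scaled {X A B d g h : ℝ} (hA : 0 ≤ A) (hB : 0 ≤ B)
    (hg : 0 ≤ g) (hh : 0 ≤ h) (hgh : d ^ 2 ≤ 4 * g * h) (hsq : X ^ 2 ≤ A * B) :
    -(g * A + h * B) ≤ d * X := by
  have hT : 0 ≤ g * A + h * B := by positivity
  have h1 : (d * X) ^ 2 ≤ (g * A + h * B) ^ 2 := by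
    nlinarith [sq_nonneg (g * A - h * B), mul_nonneg hA hB, sq_nonneg d, sq_nonneg X]
  nlinarith [h1, hT]

private lemma bb_inner_sq_le {E : Type*} [NormedAddCommGroup E] [InnerProductSpace ℝ E]
    (a b : E) : ⟪a, b⟫ ^ 2 ≤ ‖a‖ ^ 2 * ‖b‖ ^ 2 := by
  have h := abs_real_inner_le_norm a b
  nlinarith [abs_nonneg ⟪a, b⟫, sq_abs ⟪a, b⟫, norm_nonneg a, norm_nonneg b]

private lemma bb_sq2 {E : Type*} [NormedAddCommGroup E] (a b : E) :
    ‖a + b‖ ^ 2 ≤ 2 * ‖a‖ ^ 2 + 2 * ‖b‖ ^ 2 := by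
  have h := norm_add_le a b
  nlinarith [sq_nonneg (‖a‖ - ‖b‖), norm_nonneg a, norm_nonneg b, norm_nonneg (a + b)]

private lemma bb_sq3 {E : Type*} [NormedAddCommGroup E] (a b c : E) :
    ‖a + b + c‖ ^ 2 ≤ 3 * ‖a‖ ^ 2 + 3 * ‖b‖ ^ 2 + 3 * ‖c‖ ^ 2 := by
  have h := norm_add₃_le (a := a) (b := b) (c := c)
  nlinarith [sq_nonneg (‖a‖ - ‖b‖), sq_nonneg (‖a‖ - ‖c‖), sq_nonneg (‖b‖ - ‖c‖),
    norm_nonneg a, norm_nonneg b, norm_nonneg c, norm_nonneg (a + b + c)]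

private lemma bb_sqrt_sq {N b : ℝ} (hN : 0 ≤ N) (h : Real.sqrt N ≤ b) : N ≤ b ^ 2 := by
  nlinarith [Real.sq_sqrt hN, Real.sqrt_nonneg N]

private lemma bb_combine {N1 N2 N3 N4 N5 N6 N7 N8 N9 T0 T1 T2 T3 T5 D3 D4 a b c : ℝ}
    (h0 : -(1/4*N2 + 1/4*N5) ≤ T0)
    (h2 : -(1/8*N2 + a/6*N8) ≤ T2)
    (h3 : -(1/8*N3 + a/6*N8) ≤ T3)
    (h5 : -(1/8*N5 + a/6*N8) ≤ T5)
    (h1 : -(1/2*N1 + b/2*N9) ≤ T1)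
    (hD3 : a*N8 ≤ D3) (hD4 : b*N9 ≤ D4)
    (hk1 : c*N1 ≤ 1/8*N1) (hk2 : c*N2 ≤ 1/8*N2) (hk3 : c*N3 ≤ 1/8*N3)
    (hk4 : c*N4 ≤ 1/8*N4) (hk5 : c*N5 ≤ 1/8*N5) (hk6 : c*N6 ≤ 1/8*N6)
    (hk7 : c*N7 ≤ 1/8*N7) (hk8 : c*N8 ≤ a/2*N8) (hk9 : c*N9 ≤ b/2*N9)
    (n1 : 0 ≤ N1) (n2 : 0 ≤ N2) (n3 : 0 ≤ N3) (n4 : 0 ≤ N4)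
    (n6 : 0 ≤ N6) (n7 : 0 ≤ N7) :
    c*(N1+N2+N3+N4+N5+N6+N7+N8+N9) ≤
      N1+N2+N3+N4+N6+N7 + T0 + 1/2*N5 + T2 + T3 + T5 + D3 + T1 + D4 := by
  linarith

set_option maxHeartbeats 1000000 in
/-- Global parameter-robust inf-sup stability (abstract form of Theorem 3.5):
for all `C₁, C₂, Chat₁, Chat₂ > 0` there exist `c, C > 0`, depending only on
`C₁, C₂, Chat₁, Chat₂` (in particular independent of `μ, λ, κ, ν, c₀, α`), such that
in the abstract Biot–Brinkman setting, for any seminorm `r` on `P`, any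
`x = (u, v, ω, φ, p) ∈ X`, and any `ζ₂ ∈ V`, `γ₃ ∈ U` satisfying the divergence
inf-sup properties of Lemmas 3.3 and 3.4, there exists `y ∈ X` with
`⟨A(x), y⟩ ≥ c‖x‖_ε²` and `‖y‖_ε ≤ C‖x‖_ε`. -/
theorem biotBrinkman_global_inf_sup :
    ∀ C₁ C₂ Chat₁ Chat₂ : ℝ, 0 < C₁ → 0 < C₂ → 0 < Chat₁ → 0 < Chat₂ →
    ∃ c C : ℝ, 0 < c ∧ 0 < C ∧
      ∀ (U V W P Sig : Type u)
        [NormedAddCommGroup U] [InnerProductSpace ℝ U]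
        [NormedAddCommGroup V] [InnerProductSpace ℝ V]
        [NormedAddCommGroup W] [InnerProductSpace ℝ W]
        [NormedAddCommGroup P] [InnerProductSpace ℝ P]
        [NormedAddCommGroup Sig] [InnerProductSpace ℝ Sig]
        (μ lam κ ν c₀ α : ℝ),
        0 < μ → 0 < lam → 0 < κ → 0 < ν → 0 < c₀ → 0 < α →
        ∀ (eps : U →ₗ[ℝ] Sig) (divU : U →ₗ[ℝ] P) (divV : V →ₗ[ℝ] P)
          (curl : W →ₗ[ℝ] V),
        (∀ θ : W, divV (curl θ) = 0) →
        ∀ (r : Seminorm ℝ P) (u : U) (v : V) (ω : W) (φ p : P) (ζ₂ : V) (γ₃ : U),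
        -⟪p, divV ζ₂⟫ ≥ C₁ * (r p) ^ 2 →
        Real.sqrt ((1 / κ) * ‖ζ₂‖ ^ 2 + (ν / κ) * ‖divV ζ₂‖ ^ 2) ≤ C₂ * r p →
        -⟪φ, divU γ₃⟫ ≥ Chat₁ * ((1 / (2 * μ)) * ‖φ‖ ^ 2) →
        Real.sqrt (2 * μ) * ‖eps γ₃‖ ≤ Chat₂ * ((1 / Real.sqrt (2 * μ)) * ‖φ‖) →
        ∃ y : U × V × W × P × P,
          biotBrinkmanForm μ lam κ ν c₀ α eps divU divV curl (u, v, ω, φ, p) y ≥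
            c * biotBrinkmanNormESq μ lam κ ν c₀ α eps divV curl r (u, v, ω, φ, p) ∧
          Real.sqrt (biotBrinkmanNormESq μ lam κ ν c₀ α eps divV curl r y) ≤
            C * Real.sqrt
              (biotBrinkmanNormESq μ lam κ ν c₀ α eps divV curl r (u, v, ω, φ, p)) := by

  intro C₁ C₂ Chat₁ Chat₂ hC₁ hC₂ hChat₁ hChat₂
  set δ₃ : ℝ := min 1 (C₁ / (12 * C₂ ^ 2)) with hδ₃def
  set δ₄ : ℝ := min 1 (Chat₁ / Chat₂ ^ 2) with hδ₄def
  have hδ₃pos : 0 < δ₃ := lt_min one_pos (by positivity)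
  have hδ₄pos : 0 < δ₄ := lt_min one_pos (by positivity)
  have hδ₃le1 : δ₃ ≤ 1 := min_le_left _ _
  have hδ₄le1 : δ₄ ≤ 1 := min_le_left _ _
  have hδ₃le : δ₃ * (12 * C₂ ^ 2) ≤ C₁ := by
    have h := min_le_right 1 (C₁ / (12 * C₂ ^ 2))
    rw [← hδ₃def] at h
    exact (le_div_iff₀ (by positivity)).mp h
  have hδ₄le : δ₄ * Chat₂ ^ 2 ≤ Chat₁ := by
    have h := min_le_right 1 (Chat₁ / Chat₂ ^ 2)
    rw [← hδ₄def] at h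
    exact (le_div_iff₀ (by positivity)).mp h
  refine ⟨min (1/8) (min (δ₃ * C₁ / 2) (δ₄ * Chat₁ / 2)),
    Real.sqrt (3 + 5 * C₂ ^ 2 + 2 * Chat₂ ^ 2),
    lt_min (by norm_num) (lt_min (by positivity) (by positivity)),
    Real.sqrt_pos.mpr (by positivity), ?_⟩
  set c : ℝ := min (1/8) (min (δ₃ * C₁ / 2) (δ₄ * Chat₁ / 2)) with hcdef
  have hc18 : c ≤ 1/8 := min_le_left _ _
  have hcc8 : c ≤ δ₃ * C₁ / 2 := le_trans (min_le_right _ _) (min_le_left _ _)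
  have hcc9 : c ≤ δ₄ * Chat₁ / 2 := le_trans (min_le_right _ _) (min_le_right _ _)
  intro U V W P Sig iU1 iU2 iV1 iV2 iW1 iW2 iP1 iP2 iS1 iS2 μ lam κ ν c₀ α
    hμ hlam hκ hν hc₀ hα eps divU divV curl hdc r u v ω φ p ζ₂ γ₃ hpz hζ hφz hγ
  have hκ0 : κ ≠ 0 := hκ.ne'
  set s : ℝ := Real.sqrt (ν / κ) with hsdef
  have hs : s ^ 2 = ν / κ := Real.sq_sqrt (by positivity)
  have hsnn : 0 ≤ s := Real.sqrt_nonneg _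
  set t2 : ℝ := κ * s / 2 with ht2def
  have hrp : (0:ℝ) ≤ r p := apply_nonneg r p
  have hN1 : (0:ℝ) ≤ 2 * μ * ‖eps u‖ ^ 2 := by positivity
  have hN2 : (0:ℝ) ≤ (1/κ) * ‖v‖ ^ 2 := by positivity
  have hN3 : (0:ℝ) ≤ (ν/κ) * ‖divV v‖ ^ 2 := by positivity
  have hN4 : (0:ℝ) ≤ ‖ω‖ ^ 2 := by positivity
  have hN5 : (0:ℝ) ≤ ν * ‖curl ω‖ ^ 2 := by positivity
  have hN6 : (0:ℝ) ≤ c₀ * ‖p‖ ^ 2 := by positivity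
  have hN7 : (0:ℝ) ≤ (1/lam) * ‖φ - α • p‖ ^ 2 := by positivity
  have hN8 : (0:ℝ) ≤ (r p) ^ 2 := sq_nonneg _
  have hN9 : (0:ℝ) ≤ (1/(2*μ)) * ‖φ‖ ^ 2 := by positivity
  have hNnn : (0:ℝ) ≤ (1/κ) * ‖ζ₂‖ ^ 2 + (ν/κ) * ‖divV ζ₂‖ ^ 2 := by positivity
  have hNle : (1/κ) * ‖ζ₂‖ ^ 2 + (ν/κ) * ‖divV ζ₂‖ ^ 2 ≤ C₂ ^ 2 * (r p) ^ 2 := by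
    have h := bb_sqrt_sq hNnn hζ
    rw [mul_pow] at h
    exact h
  have hNz1 : (1/κ) * ‖ζ₂‖ ^ 2 ≤ C₂ ^ 2 * (r p) ^ 2 := by
    linarith only [hNle, mul_nonneg (by positivity : (0:ℝ) ≤ ν/κ) (sq_nonneg ‖divV ζ₂‖)]
  have hNz2 : (ν/κ) * ‖divV ζ₂‖ ^ 2 ≤ C₂ ^ 2 * (r p) ^ 2 := by
    linarith only [hNle, mul_nonneg (by positivity : (0:ℝ) ≤ 1/κ) (sq_nonneg ‖ζ₂‖)]
  have h2μ : Real.sqrt (2*μ) ^ 2 = 2*μ := Real.sq_sqrt (by positivity)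
  have hG : 2 * μ * ‖eps γ₃‖ ^ 2 ≤ Chat₂ ^ 2 * ((1/(2*μ)) * ‖φ‖ ^ 2) := by
    have h1 := pow_le_pow_left₀ (by positivity) hγ 2
    have h2 : ((1:ℝ)/Real.sqrt (2*μ)) ^ 2 = 1/(2*μ) := by rw [div_pow, one_pow, h2μ]
    rw [mul_pow, h2μ, mul_pow, mul_pow, h2] at h1
    linarith only [h1]
  refine ⟨(u + δ₄ • γ₃, v + t2 • curl ω + δ₃ • ζ₂, -ω, -φ, -p), ?_, ?_⟩
  · -- the inf-sup bound
    have hnorm : ‖φ - α • p‖ ^ 2 = ‖φ‖ ^ 2 - 2 * α * ⟪φ, p⟫ + α ^ 2 * ‖p‖ ^ 2 := by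
      rw [@norm_sub_sq_real]
      simp [norm_smul, real_inner_smul_right, mul_pow, sq_abs]
      ring
    have hform : biotBrinkmanForm μ lam κ ν c₀ α eps divU divV curl (u, v, ω, φ, p)
        (u + δ₄ • γ₃, v + t2 • curl ω + δ₃ • ζ₂, -ω, -φ, -p) =
        2 * μ * ‖eps u‖ ^ 2 + (1 / κ) * ‖v‖ ^ 2 + (ν / κ) * ‖divV v‖ ^ 2 + ‖ω‖ ^ 2
          + c₀ * ‖p‖ ^ 2 + (1 / lam) * ‖φ - α • p‖ ^ 2
          + (1 / κ) * t2 * ⟪v, curl ω⟫ + s * t2 * ‖curl ω‖ ^ 2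
          + δ₃ * (1 / κ) * ⟪v, ζ₂⟫ + δ₃ * (ν / κ) * ⟪divV v, divV ζ₂⟫
          + δ₃ * s * ⟪curl ω, ζ₂⟫ - δ₃ * ⟪p, divV ζ₂⟫
          + δ₄ * (2 * μ) * ⟪eps u, eps γ₃⟫ - δ₄ * ⟪φ, divU γ₃⟫ := by
      simp only [biotBrinkmanForm, map_add, map_smul, map_neg, LinearMap.map_smul,
        inner_add_right, inner_add_left, inner_neg_right, inner_neg_left,
        real_inner_smul_right, real_inner_smul_left, hdc, smul_zero, inner_zero_right,
        inner_zero_left, real_inner_self_eq_norm_sq, ← hsdef]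
      rw [hnorm, real_inner_comm p φ]
      ring
    have hst : s * t2 = ν / 2 := by
      rw [ht2def, show s * (κ * s / 2) = κ / 2 * s ^ 2 by ring, hs]
      field_simp
      try ring
    rw [hst] at hform
    have h1d : (1/κ) * t2 = s / 2 := by rw [ht2def]; field_simp; try ring
    have hB0 := young_scaled (A := ‖v‖ ^ 2) (B := ‖curl ω‖ ^ 2) (d := (1/κ) * t2)
      (g := 1/4*(1/κ)) (h := 1/4*ν) (sq_nonneg _) (sq_nonneg _) (by positivity)
      (by positivity) (le_of_eq (by rw [h1d, div_pow, hs]; ring)) (bb_inner_sq_le v (curl ω))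
    have hB2 := young_scaled (A := ‖v‖ ^ 2) (B := ‖ζ₂‖ ^ 2) (d := δ₃ * (1/κ))
      (g := 1/8*(1/κ)) (h := 2*δ₃^2*(1/κ)) (sq_nonneg _) (sq_nonneg _) (by positivity)
      (by positivity) (le_of_eq (by ring)) (bb_inner_sq_le v ζ₂)
    have hB3 := young_scaled (A := ‖divV v‖ ^ 2) (B := ‖divV ζ₂‖ ^ 2) (d := δ₃ * (ν/κ))
      (g := 1/8*(ν/κ)) (h := 2*δ₃^2*(ν/κ)) (sq_nonneg _) (sq_nonneg _) (by positivity)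
      (by positivity) (le_of_eq (by ring)) (bb_inner_sq_le (divV v) (divV ζ₂))
    have hB5 := young_scaled (A := ‖curl ω‖ ^ 2) (B := ‖ζ₂‖ ^ 2) (d := δ₃ * s)
      (g := 1/8*ν) (h := 2*δ₃^2*(1/κ)) (sq_nonneg _) (sq_nonneg _) (by positivity)
      (by positivity) (le_of_eq (by rw [mul_pow, hs]; ring)) (bb_inner_sq_le (curl ω) ζ₂)
    have hB1 := young_scaled (A := ‖eps u‖ ^ 2) (B := ‖eps γ₃‖ ^ 2) (d := δ₄ * (2*μ))
      (g := μ) (h := δ₄^2*μ) (sq_nonneg _) (sq_nonneg _) (by positivity)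
      (by positivity) (le_of_eq (by ring)) (bb_inner_sq_le (eps u) (eps γ₃))
    have hc2 : 2*δ₃^2*(1/κ) * ‖ζ₂‖ ^ 2 ≤ δ₃ * C₁ / 6 * (r p) ^ 2 := by
      have h1 := mul_le_mul_of_nonneg_left hNz1 (by positivity : (0:ℝ) ≤ 2*δ₃^2)
      have h2 := mul_le_mul_of_nonneg_right
        (mul_le_mul_of_nonneg_left hδ₃le hδ₃pos.le) (sq_nonneg (r p))
      linarith only [h1, h2]
    have hc3 : 2*δ₃^2*(ν/κ) * ‖divV ζ₂‖ ^ 2 ≤ δ₃ * C₁ / 6 * (r p) ^ 2 := by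
      have h1 := mul_le_mul_of_nonneg_left hNz2 (by positivity : (0:ℝ) ≤ 2*δ₃^2)
      have h2 := mul_le_mul_of_nonneg_right
        (mul_le_mul_of_nonneg_left hδ₃le hδ₃pos.le) (sq_nonneg (r p))
      linarith only [h1, h2]
    have hc1 : δ₄^2*μ * ‖eps γ₃‖ ^ 2 ≤ δ₄ * Chat₁ / 2 * ((1/(2*μ)) * ‖φ‖ ^ 2) := by
      have h1 := mul_le_mul_of_nonneg_left hG (by positivity : (0:ℝ) ≤ δ₄^2/2)
      have h2 := mul_le_mul_of_nonneg_right
        (mul_le_mul_of_nonneg_left hδ₄le (by positivity : (0:ℝ) ≤ δ₄/2)) hN9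
      linarith only [h1, h2]
    have hpz' := mul_le_mul_of_nonneg_left hpz.le hδ₃pos.le
    have hφz' := mul_le_mul_of_nonneg_left hφz.le hδ₄pos.le
    have big := bb_combine (a := δ₃ * C₁) (b := δ₄ * Chat₁) (c := c)
      (N1 := 2 * μ * ‖eps u‖ ^ 2) (N2 := (1/κ) * ‖v‖ ^ 2)
      (N3 := (ν/κ) * ‖divV v‖ ^ 2) (N4 := ‖ω‖ ^ 2) (N5 := ν * ‖curl ω‖ ^ 2)
      (N6 := c₀ * ‖p‖ ^ 2) (N7 := (1/lam) * ‖φ - α • p‖ ^ 2)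
      (N8 := (r p) ^ 2) (N9 := (1/(2*μ)) * ‖φ‖ ^ 2)
      (T0 := (1/κ) * t2 * ⟪v, curl ω⟫) (T1 := δ₄ * (2*μ) * ⟪eps u, eps γ₃⟫)
      (T2 := δ₃ * (1/κ) * ⟪v, ζ₂⟫) (T3 := δ₃ * (ν/κ) * ⟪divV v, divV ζ₂⟫)
      (T5 := δ₃ * s * ⟪curl ω, ζ₂⟫)
      (D3 := -(δ₃ * ⟪p, divV ζ₂⟫)) (D4 := -(δ₄ * ⟪φ, divU γ₃⟫))
      (by linarith only [hB0]) (by linarith only [hB2, hc2]) (by linarith only [hB3, hc3])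
      (by linarith only [hB5, hc2]) (by linarith only [hB1, hc1])
      (by linarith only [hpz']) (by linarith only [hφz'])
      (mul_le_mul_of_nonneg_right hc18 hN1) (mul_le_mul_of_nonneg_right hc18 hN2)
      (mul_le_mul_of_nonneg_right hc18 hN3) (mul_le_mul_of_nonneg_right hc18 hN4)
      (mul_le_mul_of_nonneg_right hc18 hN5) (mul_le_mul_of_nonneg_right hc18 hN6)
      (mul_le_mul_of_nonneg_right hc18 hN7) (mul_le_mul_of_nonneg_right hcc8 hN8)
      (mul_le_mul_of_nonneg_right hcc9 hN9)
      hN1 hN2 hN3 hN4 hN6 hN7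
    rw [ge_iff_le, hform]
    simp only [biotBrinkmanNormESq, biotBrinkmanNormXSq]
    linarith only [big]
  · -- the norm bound
    have hδ₃sq : δ₃ ^ 2 ≤ 1 := pow_le_one₀ hδ₃pos.le hδ₃le1
    have hδ₄sq : δ₄ ^ 2 ≤ 1 := pow_le_one₀ hδ₄pos.le hδ₄le1
    have ht2sq : (1/κ) * t2 ^ 2 = ν / 4 := by
      rw [ht2def, show (1/κ) * (κ * s / 2) ^ 2 = κ / 4 * s ^ 2 by field_simp; try ring, hs]
      field_simp
      try ring
    have hy1 : 2 * μ * ‖eps (u + δ₄ • γ₃)‖ ^ 2 ≤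
        2 * (2 * μ * ‖eps u‖ ^ 2) + 2 * Chat₂ ^ 2 * ((1/(2*μ)) * ‖φ‖ ^ 2) := by
      have e1 : ‖eps (u + δ₄ • γ₃)‖ ^ 2 ≤ 2 * ‖eps u‖ ^ 2 + 2 * (δ₄ ^ 2 * ‖eps γ₃‖ ^ 2) := by
        rw [map_add, map_smul]
        have h := bb_sq2 (eps u) (δ₄ • eps γ₃)
        rw [norm_smul, Real.norm_eq_abs, mul_pow, sq_abs] at h
        linarith only [h]
      have h2 := mul_le_mul hδ₄sq hG (by positivity) one_pos.le
      linarith only [mul_le_mul_of_nonneg_left e1 hμ.le, h2]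
    have hy2 : (1/κ) * ‖v + t2 • curl ω + δ₃ • ζ₂‖ ^ 2 ≤
        3 * ((1/κ) * ‖v‖ ^ 2) + (3/4) * (ν * ‖curl ω‖ ^ 2) + 3 * C₂ ^ 2 * (r p) ^ 2 := by
      have e2 : ‖v + t2 • curl ω + δ₃ • ζ₂‖ ^ 2 ≤
          3 * ‖v‖ ^ 2 + 3 * (t2 ^ 2 * ‖curl ω‖ ^ 2) + 3 * (δ₃ ^ 2 * ‖ζ₂‖ ^ 2) := by
        have h := bb_sq3 v (t2 • curl ω) (δ₃ • ζ₂)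
        rw [norm_smul, norm_smul, Real.norm_eq_abs, Real.norm_eq_abs,
          mul_pow, mul_pow, sq_abs, sq_abs] at h
        linarith only [h]
      have e3 := mul_le_mul_of_nonneg_left e2 (by positivity : (0:ℝ) ≤ 1/κ)
      have e4 : (1/κ) * t2 ^ 2 * ‖curl ω‖ ^ 2 = ν / 4 * ‖curl ω‖ ^ 2 :=
        congrArg (· * ‖curl ω‖ ^ 2) ht2sq
      have e5 := mul_le_mul hδ₃sq hNz1 (by positivity) one_pos.le
      linarith only [e3, e4, e5]
    have hdv : divV (v + t2 • curl ω + δ₃ • ζ₂) = divV v + δ₃ • divV ζ₂ := by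
      rw [map_add, map_add, map_smul, map_smul, hdc, smul_zero, add_zero]
    have hy3 : (ν/κ) * ‖divV (v + t2 • curl ω + δ₃ • ζ₂)‖ ^ 2 ≤
        2 * ((ν/κ) * ‖divV v‖ ^ 2) + 2 * C₂ ^ 2 * (r p) ^ 2 := by
      rw [hdv]
      have h := bb_sq2 (divV v) (δ₃ • divV ζ₂)
      rw [norm_smul, Real.norm_eq_abs, mul_pow, sq_abs] at h
      have e3 := mul_le_mul_of_nonneg_left h (by positivity : (0:ℝ) ≤ ν/κ)
      have e5 := mul_le_mul hδ₃sq hNz2 (by positivity) one_pos.le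
      linarith only [e3, e5]
    have hflip : -φ - α • (-p) = -(φ - α • p) := by
      rw [smul_neg]; abel
    have hEy : biotBrinkmanNormESq μ lam κ ν c₀ α eps divV curl r
        (u + δ₄ • γ₃, v + t2 • curl ω + δ₃ • ζ₂, -ω, -φ, -p) ≤
        (3 + 5 * C₂ ^ 2 + 2 * Chat₂ ^ 2) * biotBrinkmanNormESq μ lam κ ν c₀ α eps divV curl r
        (u, v, ω, φ, p) := by
      simp only [biotBrinkmanNormESq, biotBrinkmanNormXSq]
      rw [show ((u + δ₄ • γ₃, v + t2 • curl ω + δ₃ • ζ₂, -ω, -φ, -p) :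
        U × V × W × P × P).2.2.2.1 - α • (u + δ₄ • γ₃, v + t2 • curl ω + δ₃ • ζ₂,
        -ω, -φ, -p).2.2.2.2 = -(φ - α • p) from hflip]
      simp only [map_neg, norm_neg, map_neg_eq_map]
      have hsC2 := sq_nonneg C₂
      have hsCh2 := sq_nonneg Chat₂
      linarith only [hy1, hy2, hy3, hN1, hN2, hN3, hN4, hN5, hN6, hN7, hN8, hN9,
        mul_nonneg hsC2 hN1, mul_nonneg hsC2 hN2, mul_nonneg hsC2 hN3,
        mul_nonneg hsC2 hN4, mul_nonneg hsC2 hN5, mul_nonneg hsC2 hN6,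
        mul_nonneg hsC2 hN7, mul_nonneg hsC2 hN9,
        mul_nonneg hsCh2 hN1, mul_nonneg hsCh2 hN2, mul_nonneg hsCh2 hN3,
        mul_nonneg hsCh2 hN4, mul_nonneg hsCh2 hN5, mul_nonneg hsCh2 hN6,
        mul_nonneg hsCh2 hN7, mul_nonneg hsCh2 hN8]
    calc Real.sqrt (biotBrinkmanNormESq μ lam κ ν c₀ α eps divV curl r
          (u + δ₄ • γ₃, v + t2 • curl ω + δ₃ • ζ₂, -ω, -φ, -p))
        ≤ Real.sqrt ((3 + 5 * C₂ ^ 2 + 2 * Chat₂ ^ 2) *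
            biotBrinkmanNormESq μ lam κ ν c₀ α eps divV curl r (u, v, ω, φ, p)) :=
          Real.sqrt_le_sqrt hEy
      _ = Real.sqrt (3 + 5 * C₂ ^ 2 + 2 * Chat₂ ^ 2) *
            Real.sqrt (biotBrinkmanNormESq μ lam κ ν c₀ α eps divV curl r (u, v, ω, φ, p)) :=
          Real.sqrt_mul (by positivity) _
end

section
/- Weighted sum-space boundedness of the pressure–divergence coupling. Let L and V be real inner product spaces, let S be a linear subspace of L, and let D : V → L and G : S → V be linear maps satisfying the abstract integration-by-parts identity ⟨s, D ζ⟩_L = −⟨G s, ζ⟩_V for all s ∈ S and ζ ∈ V. Then for all κ > 0, ν > 0, q ∈ L, ζ ∈ V, and s ∈ S: ⟨q, D ζ⟩_L ≤ ( κ‖G s‖² + (κ/ν)‖q − s‖² )^{1/2} · ( (1/κ)‖ζ‖² + (ν/κ)‖D ζ‖² )^{1/2}. -/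
open scoped RealInnerProductSpace

/-- Weighted sum-space boundedness of the pressure–divergence coupling (Section 3.2).
`L`, `V` are real inner product spaces, `S ⊆ L` a subspace, `D : V → L` and `G : S → V`
linear maps satisfying the abstract integration-by-parts identity
`⟨s, Dζ⟩ = −⟨Gs, ζ⟩` for all `s ∈ S`, `ζ ∈ V`. Then for `κ, ν > 0` and all
`q ∈ L`, `ζ ∈ V`, `s ∈ S`:
`⟨q, Dζ⟩ ≤ (κ‖Gs‖² + (κ/ν)‖q − s‖²)^{1/2} · ((1/κ)‖ζ‖² + (ν/κ)‖Dζ‖²)^{1/2}`. -/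
theorem pressure_divergence_boundedness {L V : Type*}
    [NormedAddCommGroup L] [InnerProductSpace ℝ L]
    [NormedAddCommGroup V] [InnerProductSpace ℝ V]
    (S : Submodule ℝ L) (D : V →ₗ[ℝ] L) (G : S →ₗ[ℝ] V)
    (hibp : ∀ (s : S) (ζ : V), ⟪(s : L), D ζ⟫ = - ⟪G s, ζ⟫)
    (κ ν : ℝ) (hκ : 0 < κ) (hν : 0 < ν) (q : L) (ζ : V) (s : S) :
    ⟪q, D ζ⟫ ≤ Real.sqrt (κ * ‖G s‖ ^ 2 + (κ / ν) * ‖q - (s : L)‖ ^ 2) *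
      Real.sqrt ((1 / κ) * ‖ζ‖ ^ 2 + (ν / κ) * ‖D ζ‖ ^ 2) := by
  have h1 : ⟪q, D ζ⟫ = ⟪q - (s : L), D ζ⟫ + ⟪(s : L), D ζ⟫ := by
    rw [← inner_add_left, sub_add_cancel]
  have h2 : ⟪q, D ζ⟫ ≤ ‖q - (s : L)‖ * ‖D ζ‖ + ‖G s‖ * ‖ζ‖ := by
    rw [h1, hibp]
    have ha := real_inner_le_norm (q - (s : L)) (D ζ)
    have hb := abs_real_inner_le_norm (G s) ζ
    have hb' : - ⟪G s, ζ⟫ ≤ ‖G s‖ * ‖ζ‖ := by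
      have := neg_abs_le (⟪G s, ζ⟫); linarith [abs_real_inner_le_norm (G s) ζ]
    linarith
  set a := ‖q - (s : L)‖; set b := ‖D ζ‖; set c := ‖G s‖; set d := ‖ζ‖
  have ha : 0 ≤ a := norm_nonneg _
  have hb : 0 ≤ b := norm_nonneg _
  have hc : 0 ≤ c := norm_nonneg _
  have hd : 0 ≤ d := norm_nonneg _
  have hA : 0 ≤ κ * c ^ 2 + (κ / ν) * a ^ 2 := by positivity
  have hB : 0 ≤ (1 / κ) * d ^ 2 + (ν / κ) * b ^ 2 := by positivity
  have key : a * b + c * d ≤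
      Real.sqrt (κ * c ^ 2 + (κ / ν) * a ^ 2) *
        Real.sqrt ((1 / κ) * d ^ 2 + (ν / κ) * b ^ 2) := by
    rw [← Real.sqrt_mul hA]
    rw [show (κ * c ^ 2 + (κ / ν) * a ^ 2) * ((1 / κ) * d ^ 2 + (ν / κ) * b ^ 2)
        = c ^ 2 * d ^ 2 + ν * c ^ 2 * b ^ 2 + (1 / ν) * a ^ 2 * d ^ 2 + a ^ 2 * b ^ 2 by
      field_simp; ring]
    rw [Real.le_sqrt (by positivity)]
    pick_goal 2
    · have h1' : 0 ≤ ν * c ^ 2 * b ^ 2 := by positivity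
      have h2' : 0 ≤ (1 / ν) * a ^ 2 * d ^ 2 := by
        have : 0 < (1:ℝ)/ν := by positivity
        positivity
      nlinarith [sq_nonneg (c*d), sq_nonneg (a*b)]
    have he : 0 < (1:ℝ) / ν := by positivity
    have hkey : 2 * (a * b) * (c * d) ≤ ν * c ^ 2 * b ^ 2 + (1 / ν) * a ^ 2 * d ^ 2 := by
      have h0 := mul_nonneg he.le (sq_nonneg (ν * (c * b) - a * d))
      have heq : ν * c ^ 2 * b ^ 2 + (1 / ν) * a ^ 2 * d ^ 2 - 2 * (a * b) * (c * d)
          = (1 / ν) * (ν * (c * b) - a * d) ^ 2 := by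
        field_simp; ring
      linarith
    nlinarith [hkey]
  linarith
end
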